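/- arXiv:1908.05694 — 2 statements merged into one kernel-verified Lean document; each statement's English description precedes it below -/
import Mathlib

section
/- (Deletion–contraction) For any edge e of a finite graph G, χ(G, t) = χ(G − e, t) − χ(G/e, t), where G − e is G with e deleted and G/e is G with the endpoints of e identified (keeping the graph simple). -/
/-!
The colorings of `G - uv` split according to whether `u` and `v` receive the same color. Those
giving them different colors are exactly the colorings of `G`. Those giving them the same color
factor through the map `V → V ∖ {v}` sending `v` to `u`; since every edge of `G/uv` is the image
of an edge of `G - uv` under that map, they are exactly the colorings of `G/uv`.
-/

/-- The number of proper colorings of `G` with `t` colors. -/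
noncomputable def chi {V : Type*} (G : SimpleGraph V) (t : ℕ) : ℕ :=
  Nat.card (G.Coloring (Fin t))

/-- The contraction `G/e` of the edge `e = {u, v}`: the vertex `v` is removed and identified
with `u`; parallel edges are merged (the graph stays simple). -/
def contractEdge {V : Type*} (G : SimpleGraph V) (u v : V) :
    SimpleGraph {x : V // x ≠ v} :=
  SimpleGraph.fromRel (fun a b =>
    G.Adj a.1 b.1 ∨ (a.1 = u ∧ G.Adj v b.1) ∨ (b.1 = u ∧ G.Adj a.1 v))

namespace SimpleGraph

variable {V α : Type*} {G : SimpleGraph V} {u v : V}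

lemma deleteEdges_singleton_adj {a b : V} :
    (G.deleteEdges {s(u, v)}).Adj a b ↔
      G.Adj a b ∧ ¬(a = u ∧ b = v ∨ a = v ∧ b = u) := by
  simp only [deleteEdges_adj, Set.mem_singleton_iff, Sym2.eq_iff]

def coloringEquivDeleteEdges (h : G.Adj u v) :
    G.Coloring α ≃ {c : (G.deleteEdges {s(u, v)}).Coloring α // c u ≠ c v} where
  toFun c := ⟨c.comp (Hom.ofLE (G.deleteEdges_le _)), c.valid h⟩
  invFun c := Coloring.mk c.1 fun {a b} hab => by
    by_cases hdel : (G.deleteEdges {s(u, v)}).Adj a b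
    · exact c.1.valid hdel
    · obtain ⟨rfl, rfl⟩ | ⟨rfl, rfl⟩ : a = u ∧ b = v ∨ a = v ∧ b = u := by
        simpa only [deleteEdges_singleton_adj, hab, true_and, not_not] using hdel
      exacts [c.2, c.2.symm]
  left_inv _ := rfl
  right_inv _ := rfl

section mergeVertex

variable [DecidableEq V]

def mergeVertex (huv : u ≠ v) (x : V) : {x : V // x ≠ v} :=
  if hx : x = v then ⟨u, huv⟩ else ⟨x, hx⟩

@[simp] lemma mergeVertex_self (huv : u ≠ v) : mergeVertex huv v = ⟨u, huv⟩ := dif_pos rfl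

@[simp] lemma mergeVertex_coe (huv : u ≠ v) (x : {x : V // x ≠ v}) : mergeVertex huv x = x :=
  dif_neg x.2

@[simp] lemma mergeVertex_left (huv : u ≠ v) : mergeVertex huv u = ⟨u, huv⟩ :=
  mergeVertex_coe huv ⟨u, huv⟩

lemma apply_mergeVertex {f : V → α} (huv : u ≠ v) (hf : f u = f v) (x : V) :
    f (mergeVertex huv x) = f x := by
  unfold mergeVertex
  split_ifs with hx <;> simp [hx, hf]

def contractEdgeHom (huv : u ≠ v) : G.deleteEdges {s(u, v)} →g contractEdge G u v where
  toFun := mergeVertex huv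
  map_rel' {a b} hab := by
    rw [deleteEdges_singleton_adj] at hab
    have hne := hab.1.ne
    unfold mergeVertex
    split_ifs <;> simp only [contractEdge, fromRel_adj, ne_eq, Subtype.ext_iff] <;>
      grind [G.adj_symm]

lemma exists_mergeVertex_of_contractEdge_adj (huv : u ≠ v) {a b : {x : V // x ≠ v}}
    (hab : (contractEdge G u v).Adj a b) :
    ∃ a' b', (G.deleteEdges {s(u, v)}).Adj a' b' ∧ mergeVertex huv a' = a ∧
      mergeVertex huv b' = b := by
  obtain ⟨hne, hr⟩ := fromRel_adj _ a b |>.mp hab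
  replace hne : a.1 ≠ b.1 := Subtype.coe_ne_coe.mpr hne
  rcases hr with (h | ⟨ha, h⟩ | ⟨hb, h⟩) | (h | ⟨hb, h⟩ | ⟨ha, h⟩)
  · exact ⟨a, b, deleteEdges_singleton_adj.mpr ⟨h, by grind⟩, by simp, by simp⟩
  · exact ⟨v, b, deleteEdges_singleton_adj.mpr ⟨h, by grind⟩,
      by simp [Subtype.ext_iff, ha], by simp⟩
  · exact ⟨a, v, deleteEdges_singleton_adj.mpr ⟨h, by grind⟩,
      by simp, by simp [Subtype.ext_iff, hb]⟩
  · exact ⟨a, b, deleteEdges_singleton_adj.mpr ⟨h.symm, by grind⟩, by simp, by simp⟩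
  · exact ⟨a, v, deleteEdges_singleton_adj.mpr ⟨h.symm, by grind⟩,
      by simp, by simp [Subtype.ext_iff, hb]⟩
  · exact ⟨v, b, deleteEdges_singleton_adj.mpr ⟨h.symm, by grind⟩,
      by simp [Subtype.ext_iff, ha], by simp⟩

def Coloring.restrictContractEdge (huv : u ≠ v) (c : (G.deleteEdges {s(u, v)}).Coloring α)
    (hc : c u = c v) : (contractEdge G u v).Coloring α :=
  Coloring.mk (fun x => c x) fun {a b} hab => by
    obtain ⟨a', b', hadj, rfl, rfl⟩ := exists_mergeVertex_of_contractEdge_adj huv hab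
    simpa only [apply_mergeVertex huv hc] using c.valid hadj

def coloringContractEdgeEquiv (huv : u ≠ v) :
    (contractEdge G u v).Coloring α ≃
      {c : (G.deleteEdges {s(u, v)}).Coloring α // c u = c v} where
  toFun d := ⟨d.comp (contractEdgeHom huv), by simp [contractEdgeHom]⟩
  invFun c := c.1.restrictContractEdge huv c.2
  left_inv d := by ext x; exact congrArg d (mergeVertex_coe huv x)
  right_inv c := by ext x; exact apply_mergeVertex huv c.2 x

end mergeVertex

theorem card_coloring_deleteEdges [Finite V] [Finite α] (h : G.Adj u v) :
    Nat.card ((G.deleteEdges {s(u, v)}).Coloring α) =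
      Nat.card (G.Coloring α) + Nat.card ((contractEdge G u v).Coloring α) := by
  classical
  have : Finite ((G.deleteEdges {s(u, v)}).Coloring α) :=
    Finite.of_injective _ DFunLike.coe_injective
  rw [Nat.card_congr (coloringEquivDeleteEdges h), Nat.card_congr (coloringContractEdgeEquiv h.ne),
    add_comm, ← Nat.card_sum, Nat.card_congr (Equiv.sumCompl _)]

end SimpleGraph

theorem chi_deletion_contraction_general {V : Type*} [Fintype V]
    (G : SimpleGraph V) (u v : V) (h : G.Adj u v) (t : ℕ) :
    (chi G t : ℤ) =
      chi (G.deleteEdges {s(u, v)}) t - chi (contractEdge G u v) t := by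
  rw [chi, chi, chi, SimpleGraph.card_coloring_deleteEdges h]
  push_cast
  ring

/-- Deletion–contraction: for any edge `e = {u, v}` of a finite simple graph `G`,
`χ(G, t) = χ(G − e, t) − χ(G/e, t)`. -/
theorem chi_deletion_contraction {V : Type*} [Fintype V] [DecidableEq V]
    (G : SimpleGraph V) (u v : V) (h : G.Adj u v) (t : ℕ) :
    (chi G t : ℤ) =
      chi (G.deleteEdges {s(u, v)}) t - chi (contractEdge G u v) t :=
  chi_deletion_contraction_general G u v h t
end

section
/- For every finite simple graph G on n vertices, the counting function t ↦ χ(G, t) agrees with a monic polynomial of degree n with integer coefficients. -/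
open Finset Polynomial SimpleGraph

section Aux

variable {V : Type*} [Fintype V]

/-- Number of connected components of the graph with edge set `s`. -/
noncomputable def comps (s : Finset (Sym2 V)) : ℕ :=
  Nat.card (SimpleGraph.fromEdgeSet (↑s : Set (Sym2 V))).ConnectedComponent

lemma comps_empty : comps (∅ : Finset (Sym2 V)) = Fintype.card V := by
  have h : Function.Bijective
      ((⊥ : SimpleGraph V).connectedComponentMk) := by
    constructor
    · intro a b hab
      exact (SimpleGraph.reachable_bot).mp (SimpleGraph.ConnectedComponent.exact hab)
    · exact Quot.mk_surjective
  have := Nat.card_eq_of_bijective _ h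
  simp only [comps, Finset.coe_empty, SimpleGraph.fromEdgeSet_empty]
  rw [← this, Nat.card_eq_fintype_card]

lemma comps_lt {s : Finset (Sym2 V)} (e : Sym2 V) (he : e ∈ s) (hd : ¬ e.IsDiag) :
    comps s < Fintype.card V := by
  set H := SimpleGraph.fromEdgeSet (↑s : Set (Sym2 V)) with hH
  haveI : Finite H.ConnectedComponent := Quot.finite _
  haveI : Fintype H.ConnectedComponent := Fintype.ofFinite _
  rw [comps, Nat.card_eq_fintype_card]
  refine Fintype.card_lt_of_surjective_not_injective H.connectedComponentMk
    Quot.mk_surjective ?_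
  intro hinj
  induction e with
  | h a b =>
    have hab : a ≠ b := by simpa [Sym2.isDiag_iff_proj_eq] using hd
    have hadj : H.Adj a b := (SimpleGraph.fromEdgeSet_adj _).mpr ⟨by exact_mod_cast he, hab⟩
    exact hab (hinj (SimpleGraph.ConnectedComponent.connectedComponentMk_eq_of_adj hadj))

/-- Functions constant on each edge of `s` are counted by `t ^ comps s`. -/
lemma card_const_on (s : Finset (Sym2 V)) (t : ℕ) :
    Nat.card {f : V → Fin t //
      ∀ v w, (SimpleGraph.fromEdgeSet (↑s : Set (Sym2 V))).Adj v w → f v = f w}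
      = t ^ comps s := by
  set H := SimpleGraph.fromEdgeSet (↑s : Set (Sym2 V)) with hH
  have key : ∀ (f : V → Fin t), (∀ v w, H.Adj v w → f v = f w) →
      ∀ (v w : V) (p : H.Walk v w), p.IsPath → f v = f w := by
    intro f hf v w p hp
    clear hp
    induction p with
    | nil => rfl
    | cons h q ih => exact (hf _ _ h).trans ih
  have e : {f : V → Fin t // ∀ v w, H.Adj v w → f v = f w}
      ≃ (H.ConnectedComponent → Fin t) :=
    { toFun := fun f => ConnectedComponent.lift f.1 (key f.1 f.2)
      invFun := fun g => ⟨fun v => g (H.connectedComponentMk v),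
        fun v w h =>
          congrArg g (SimpleGraph.ConnectedComponent.connectedComponentMk_eq_of_adj h)⟩
      left_inv := fun f => Subtype.ext (funext fun v => rfl)
      right_inv := fun g => funext (ConnectedComponent.ind fun v => rfl) }
  haveI : Finite H.ConnectedComponent := Quot.finite _
  rw [Nat.card_congr e, Nat.card_fun, Nat.card_eq_fintype_card (α := Fin t),
    Fintype.card_fin, comps]

end Aux

/-- For every finite simple graph `G` on `n` vertices, the counting function `t ↦ χ(G, t)`
agrees with a monic integer polynomial of degree `n`. -/
theorem chi_is_polynomial {V : Type*} [Fintype V] (G : SimpleGraph V)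
    (n : ℕ) (hn : n = Fintype.card V) :
    ∃ P : Polynomial ℤ, P.Monic ∧ P.natDegree = n ∧ ∀ t : ℕ, P.eval (t : ℤ) = chi G t := by
  classical
  set E := G.edgeFinset with hE
  set P : Polynomial ℤ :=
    X ^ n + ∑ s ∈ E.powerset.erase ∅, C ((-1 : ℤ) ^ s.card) * X ^ comps s with hP
  -- every nonempty member of the powerset gives components < n
  have hlt : ∀ s ∈ E.powerset.erase ∅, comps s < n := by
    intro s hs
    rw [Finset.mem_erase, Finset.mem_powerset] at hs
    obtain ⟨e, he⟩ := Finset.nonempty_iff_ne_empty.mpr hs.1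
    have heE : e ∈ G.edgeSet := by
      rw [← SimpleGraph.mem_edgeFinset]; exact hs.2 he
    have hd : ¬ e.IsDiag := G.not_isDiag_of_mem_edgeSet heE
    rw [hn]; exact comps_lt e he hd
  -- degree of the sum part is < n
  have hdegsum : (∑ s ∈ E.powerset.erase ∅,
      C ((-1 : ℤ) ^ s.card) * X ^ comps s).degree < (n : WithBot ℕ) := by
    refine lt_of_le_of_lt (Polynomial.degree_sum_le _ _) ?_
    rw [Finset.sup_lt_iff (by exact WithBot.bot_lt_coe n)]
    intro s hs
    refine lt_of_le_of_lt (Polynomial.degree_C_mul_X_pow_le _ _) ?_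
    exact_mod_cast hlt s hs
  have hmonic : P.Monic := by
    refine (Polynomial.monic_X_pow n).add_of_left ?_
    rwa [Polynomial.degree_X_pow]
  have hdeg : P.natDegree = n := by
    have : P.degree = (n : WithBot ℕ) := by
      rw [hP, Polynomial.degree_add_eq_left_of_degree_lt
        (by rwa [Polynomial.degree_X_pow]), Polynomial.degree_X_pow]
    exact Polynomial.natDegree_eq_of_degree_eq_some this
  refine ⟨P, hmonic, hdeg, fun t => ?_⟩
  -- evaluation
  have heval : P.eval (t : ℤ)
      = ∑ s ∈ E.powerset, (-1 : ℤ) ^ s.card * (t : ℤ) ^ comps s := by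
    rw [← Finset.add_sum_erase E.powerset
      (fun s => (-1 : ℤ) ^ s.card * (t : ℤ) ^ comps s) (Finset.empty_mem_powerset E)]
    simp only [hP, Polynomial.eval_add, Polynomial.eval_pow, Polynomial.eval_X,
      Polynomial.eval_finset_sum, Polynomial.eval_mul, Polynomial.eval_C,
      Finset.card_empty, pow_zero, one_mul, comps_empty, hn]
  rw [heval]
  -- interpret chi as a count of proper functions
  set mono : (V → Fin t) → Sym2 V → Prop := fun f e => ∀ v ∈ e, ∀ w ∈ e, f v = f w
    with hmono
  set proper : (V → Fin t) → Prop := fun f => ∀ v w, G.Adj v w → f v ≠ f w with hproper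
  have hchi : (chi G t : ℤ) = ((Finset.univ.filter proper).card : ℤ) := by
    have e1 : G.Coloring (Fin t) ≃ {f : V → Fin t // proper f} :=
      { toFun := fun c => ⟨c, fun v w h => c.valid h⟩
        invFun := fun f => SimpleGraph.Coloring.mk f.1 (fun {v w} h => f.2 v w h)
        left_inv := fun c => rfl
        right_inv := fun f => rfl }
    rw [chi, Nat.card_congr e1, Nat.card_eq_fintype_card, Fintype.card_subtype]
  rw [hchi]
  -- the count of functions monochromatic on all edges of s equals t ^ comps s
  have hcount : ∀ s ∈ E.powerset,
      ((Finset.univ.filter (fun f : V → Fin t => ∀ e ∈ s, mono f e)).card : ℤ)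
        = (t : ℤ) ^ comps s := by
    intro s hs
    rw [Finset.mem_powerset] at hs
    have hiff : ∀ f : V → Fin t, (∀ e ∈ s, mono f e) ↔
        (∀ v w, (SimpleGraph.fromEdgeSet (↑s : Set (Sym2 V))).Adj v w → f v = f w) := by
      intro f
      constructor
      · intro h v w hvw
        rw [SimpleGraph.fromEdgeSet_adj _] at hvw
        exact h _ (by exact_mod_cast hvw.1) v (Sym2.mem_mk_left v w) w (Sym2.mem_mk_right v w)
      · intro h e he v hv w hw
        induction e with
        | h a b =>
          have hab : f a = f b := by
            by_cases hab' : a = b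
            · rw [hab']
            · exact h a b ((SimpleGraph.fromEdgeSet_adj _).mpr ⟨by exact_mod_cast he, hab'⟩)
          rcases Sym2.mem_iff.mp hv with rfl | rfl <;>
            rcases Sym2.mem_iff.mp hw with rfl | rfl <;> simp [hab]
    have : (Finset.univ.filter (fun f : V → Fin t => ∀ e ∈ s, mono f e)).card
        = t ^ comps s := by
      rw [← card_const_on s t, Nat.card_eq_fintype_card, Fintype.card_subtype]
      congr 1
      apply Finset.filter_congr
      intro f _
      simpa using hiff f
    exact_mod_cast this
  -- inclusion-exclusion
  calc ∑ s ∈ E.powerset, (-1 : ℤ) ^ s.card * (t : ℤ) ^ comps s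
      = ∑ s ∈ E.powerset, (-1 : ℤ) ^ s.card *
          ((Finset.univ.filter (fun f : V → Fin t => ∀ e ∈ s, mono f e)).card : ℤ) := by
        refine Finset.sum_congr rfl fun s hs => ?_
        rw [hcount s hs]
    _ = ∑ s ∈ E.powerset, ∑ f : V → Fin t,
          (if ∀ e ∈ s, mono f e then (-1 : ℤ) ^ s.card else 0) := by
        refine Finset.sum_congr rfl fun s _ => ?_
        rw [Finset.card_filter]
        push_cast
        rw [Finset.mul_sum]
        refine Finset.sum_congr rfl fun f _ => ?_
        by_cases h : ∀ e ∈ s, mono f e <;> simp [h]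
    _ = ∑ f : V → Fin t, ∑ s ∈ E.powerset,
          (if ∀ e ∈ s, mono f e then (-1 : ℤ) ^ s.card else 0) := Finset.sum_comm
    _ = ∑ f : V → Fin t, (if proper f then (1 : ℤ) else 0) := by
        refine Finset.sum_congr rfl fun f _ => ?_
        have hbad : (E.filter (fun e => mono f e)).powerset
            = E.powerset.filter (fun s => ∀ e ∈ s, mono f e) := by
          ext s
          simp only [Finset.mem_powerset, Finset.mem_filter]
          constructor
          · intro hsub
            refine ⟨fun x hx => (Finset.mem_filter.mp (hsub hx)).1,
              fun e he => (Finset.mem_filter.mp (hsub he)).2⟩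
          · intro ⟨h1, h2⟩ x hx
            exact Finset.mem_filter.mpr ⟨h1 hx, h2 x hx⟩
        rw [← Finset.sum_filter, ← hbad, Finset.sum_powerset_neg_one_pow_card]
        congr 1
        rw [eq_iff_iff, Finset.filter_eq_empty_iff]
        constructor
        · intro h v w hvw hfvw
          have hmem : s(v, w) ∈ E := by
            rw [hE, SimpleGraph.mem_edgeFinset]; exact hvw
          refine h hmem ?_
          intro x hx y hy
          rcases Sym2.mem_iff.mp hx with rfl | rfl <;>
            rcases Sym2.mem_iff.mp hy with rfl | rfl <;> simp [hfvw]
        · intro h e he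
          have heE : e ∈ G.edgeSet := by rwa [← SimpleGraph.mem_edgeFinset]
          induction e with
          | h a b =>
            have hadj : G.Adj a b := heE
            intro hm
            exact h a b hadj (hm a (Sym2.mem_mk_left a b) b (Sym2.mem_mk_right a b))
    _ = ((Finset.univ.filter proper).card : ℤ) := by
        rw [Finset.card_filter]
        push_cast
        rfl
end
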